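/- In the 1-standard case with Π(1) = {α̃}: η(W⁰_min) = {η(w) : k_α(w) ≥ −1 for all α ∈ Π} and η(W⁰_max) = {η(w) : k_α(w) ≤ 1 for all α ∈ Π}. In particular, if α̃ corresponds to a minuscule coweight (i.e., (ϖ_{α̃}^∨, γ) ∈ {−1,0,1} for all γ ∈ Δ, the abelian case), then W⁰_min = W⁰_max = W⁰. -/

import Mathlib

open RealInnerProductSpace

variable {V : Type*} [NormedAddCommGroup V] [InnerProductSpace ℝ V] [FiniteDimensional ℝ V]

/-- The orthogonal reflection in the hyperplane orthogonal to `α`. -/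
noncomputable def sref (α : V) : V ≃ₗ[ℝ] V :=
  (Submodule.reflection ((ℝ ∙ α)ᗮ)).toLinearEquiv

/-- `Δ` is an (irreducible, crystallographic, reduced) root system, equipped with a
`ℤ`-grading `d` (so that `Δ(i) = {γ ∈ Δ | d γ = i}`) and a compatible set `Pos = Δ⁺`
of positive roots (compatibility: every root of level `≥ 1` is positive). -/
structure GradedRootSystem (Δ : Set V) (d : V → ℤ) (Pos : Set V) : Prop where
  finite : Δ.Finite
  span_top : Submodule.span ℝ Δ = ⊤
  nonzero : ∀ α ∈ Δ, α ≠ 0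
  neg_mem : ∀ α ∈ Δ, -α ∈ Δ
  reduced : ∀ α ∈ Δ, ∀ c : ℝ, c • α ∈ Δ → c = 1 ∨ c = -1
  reflect_mem : ∀ α ∈ Δ, ∀ β ∈ Δ, β - (2 * ⟪β, α⟫ / ⟪α, α⟫) • α ∈ Δ
  crystallographic : ∀ α ∈ Δ, ∀ β ∈ Δ, ∃ n : ℤ, (n : ℝ) = 2 * ⟪β, α⟫ / ⟪α, α⟫
  irreducible : ∀ Δ₁ Δ₂ : Set V, Δ = Δ₁ ∪ Δ₂ → (∀ a ∈ Δ₁, ∀ b ∈ Δ₂, ⟪a, b⟫ = 0) →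
    Δ₁ = ∅ ∨ Δ₂ = ∅
  grade_add : ∀ γ₁ ∈ Δ, ∀ γ₂ ∈ Δ, γ₁ + γ₂ ∈ Δ → d (γ₁ + γ₂) = d γ₁ + d γ₂
  grade_neg : ∀ γ ∈ Δ, d (-γ) = - d γ
  pos_subset : Pos ⊆ Δ
  pos_iff : ∀ γ ∈ Δ, (γ ∈ Pos ↔ -γ ∉ Pos)
  pos_add : ∀ γ₁ ∈ Pos, ∀ γ₂ ∈ Pos, γ₁ + γ₂ ∈ Δ → γ₁ + γ₂ ∈ Pos
  compatible : ∀ γ ∈ Δ, 1 ≤ d γ → γ ∈ Pos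

/-- The level set `Δ(i)` of the grading. -/
def level (Δ : Set V) (d : V → ℤ) (i : ℤ) : Set V := {γ ∈ Δ | d γ = i}

/-- `Δ(≥ k)`. -/
def levelGE (Δ : Set V) (d : V → ℤ) (k : ℤ) : Set V := {γ ∈ Δ | k ≤ d γ}

/-- `Δ(≤ k)`. -/
def levelLE (Δ : Set V) (d : V → ℤ) (k : ℤ) : Set V := {γ ∈ Δ | d γ ≤ k}

/-- `Δ(0)⁺`, the positive part of `Δ(0)`. -/
def pos0 (d : V → ℤ) (Pos : Set V) : Set V := {γ ∈ Pos | d γ = 0}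

/-- The simple roots of a positive system `P`: positive roots that are not the sum
of two positive roots. -/
def simpleRoots (P : Set V) : Set V := {γ ∈ P | ¬ ∃ a ∈ P, ∃ b ∈ P, γ = a + b}

/-- `idealPow Δ I k = I^k`, with `I¹ = I` and `I^{k+1} = (I + I^k) ∩ Δ`
(and `I⁰ = ∅` by convention). -/
def idealPow (Δ I : Set V) : ℕ → Set V
  | 0 => ∅
  | 1 => I
  | (k+2) => {x ∈ Δ | ∃ a ∈ I, ∃ b ∈ idealPow Δ I (k+1), x = a + b}

/-- `⟨I⟩ = ⋃_{k ≥ 1} I^k`. -/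
def gen (Δ I : Set V) : Set V := ⋃ k : ℕ, idealPow Δ I (k+1)

/-- A subset `M` of roots is closed if it is closed under root addition. -/
def IsClosedSubset (Δ M : Set V) : Prop :=
  ∀ γ₁ ∈ M, ∀ γ₂ ∈ M, γ₁ + γ₂ ∈ Δ → γ₁ + γ₂ ∈ M

/-- Bi-convexity of `M ⊆ Δ⁺`: both `M` and `Δ⁺ \ M` are closed. -/
def IsBiConvex (Δ Pos M : Set V) : Prop :=
  IsClosedSubset Δ M ∧ IsClosedSubset Δ (Pos \ M)

/-- The partial order on each level `Δ(i)`: `γ' ≼ γ` iff `γ - γ'` is a nonnegative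
integral combination of the simple roots `Π(0)` of `Δ(0)⁺`. -/
def leLevel (d : V → ℤ) (Pos : Set V) (γ' γ : V) : Prop :=
  γ - γ' ∈ AddSubmonoid.closure (simpleRoots (pos0 d Pos))

/-- A lower ideal of the weight poset `Δ(i)`. -/
def IsLowerIdeal (Δ : Set V) (d : V → ℤ) (Pos : Set V) (i : ℤ) (I : Set V) : Prop :=
  I ⊆ level Δ d i ∧ ∀ γ ∈ I, ∀ ν ∈ level Δ d i, leLevel d Pos ν γ → ν ∈ I

/-- An upper ideal of the weight poset `Δ(i)`. -/
def IsUpperIdeal (Δ : Set V) (d : V → ℤ) (Pos : Set V) (i : ℤ) (I : Set V) : Prop :=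
  I ⊆ level Δ d i ∧ ∀ γ ∈ I, ∀ ν ∈ level Δ d i, leLevel d Pos γ ν → ν ∈ I

/-- The Weyl group of the set of roots `S`: the subgroup of `GL(V)` generated by the
reflections `s_α`, `α ∈ S`. -/
noncomputable def weyl (S : Set V) : Subgroup (V ≃ₗ[ℝ] V) :=
  Subgroup.closure {g | ∃ α ∈ S, g = sref α}

/-- The inversion set `N(w) = {γ ∈ Δ⁺ | -w(γ) ∈ Δ⁺}`. -/
def invSet (Pos : Set V) (w : V ≃ₗ[ℝ] V) : Set V := {γ ∈ Pos | -(w γ) ∈ Pos}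

/-- `W⁰`, the minimal length coset representatives of `W/W(0)`:
elements of `W` sending `Δ(0)⁺` into `Δ⁺`. -/
noncomputable def W0 (Δ : Set V) (d : V → ℤ) (Pos : Set V) : Set (V ≃ₗ[ℝ] V) :=
  {w | w ∈ weyl Δ ∧ ∀ γ ∈ pos0 d Pos, w γ ∈ Pos}

/-- `W⁰_min`: the set of elements `w ∈ W⁰` that are of minimal length in the fiber
`τ⁻¹(N(w) ∩ Δ(1))`, i.e. the minimal elements `w_{I,min}` of all lower ideals `I`. -/
noncomputable def Wmin (Δ : Set V) (d : V → ℤ) (Pos : Set V) : Set (V ≃ₗ[ℝ] V) :=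
  {w ∈ W0 Δ d Pos | ∀ w' ∈ W0 Δ d Pos,
    invSet Pos w' ∩ level Δ d 1 = invSet Pos w ∩ level Δ d 1 →
    invSet Pos w ⊆ invSet Pos w'}

/-- `W⁰_max`: the set of elements `w ∈ W⁰` that are of maximal length in the fiber
`τ⁻¹(N(w) ∩ Δ(1))`, i.e. the maximal elements `w_{I,max}` of all lower ideals `I`. -/
noncomputable def Wmax (Δ : Set V) (d : V → ℤ) (Pos : Set V) : Set (V ≃ₗ[ℝ] V) :=
  {w ∈ W0 Δ d Pos | ∀ w' ∈ W0 Δ d Pos,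
    invSet Pos w' ∩ level Δ d 1 = invSet Pos w ∩ level Δ d 1 →
    invSet Pos w' ⊆ invSet Pos w}

/-!
For a simple root `α` with `|k_α(w)| ≥ 2`, the element `s_α w` again lies in `W⁰` and has the
same inversions of level 1 as `w`, while the root `∓w⁻¹α` of level `≥ 2` leaves or enters the
inversion set. Hence `w` is not minimal in its fibre if `k_α(w) ≤ -2`, and not maximal if
`k_α(w) ≥ 2`.

Conversely, the key fact is a splitting lemma: if a linear map `f` preserves `Δ` and
`d (f α) ≤ 1` for every simple root `α`, then every positive root `ξ` such that `f ξ` is positive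
of level `≥ 2` is a sum of two positive roots that `f` maps to positive roots. With
`f = -w⁻¹` (when all `k_α(w) ≥ -1`) it splits every inversion of `w` of level `≥ 2` into two
inversions of `w`; since inversion sets are closed, induction along the positive roots gives
`N(w) ⊆ N(w')` for every `w' ∈ W⁰` with the same inversions of level 1. With `f = w⁻¹` (when
all `k_α(w) ≤ 1`) the same argument runs on the complements `Δ⁺ \ N(w)`, which are closed too.

In the minuscule case all inversions of elements of `W⁰` have level 1, so every fibre consists
of elements with one and the same inversion set.
-/

section

omit [FiniteDimensional ℝ V]

open scoped Pointwise

theorem sref_apply (α x : V) : sref α x = x - (2 * ⟪x, α⟫ / ⟪α, α⟫) • α := by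
  change (ℝ ∙ α)ᗮ.reflection x = _
  rw [Submodule.reflection_orthogonal_apply, Submodule.reflection_singleton_apply,
    real_inner_self_eq_norm_sq, real_inner_comm]
  simp only [RCLike.ofReal_real_eq_id, id_eq]
  module

theorem sref_sref (α x : V) : sref α (sref α x) = x :=
  Submodule.reflection_reflection _ x

theorem sref_self (α : V) : sref α α = -α :=
  Submodule.reflection_orthogonalComplement_singleton_eq_neg α

theorem AddSubsemigroup.exists_multiset_of_mem_closure {M : Type*} [AddCommMonoid M]
    {S : Set M} {x : M} (hx : x ∈ AddSubsemigroup.closure S) :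
    ∃ s : Multiset M, s ≠ 0 ∧ (∀ z ∈ s, z ∈ S) ∧ s.sum = x := by
  induction hx using AddSubsemigroup.closure_induction with
  | mem x hx => exact ⟨{x}, by simp, by simpa using hx, by simp⟩
  | add x y _ _ hx hy =>
    obtain ⟨s, hs, hsS, rfl⟩ := hx
    obtain ⟨t, -, htS, rfl⟩ := hy
    refine ⟨s + t, by simp [hs], fun z hz => ?_, Multiset.sum_add s t⟩
    rcases Multiset.mem_add.1 hz with hz | hz
    exacts [hsS z hz, htS z hz]

theorem Module.Basis.repr_apply_eq_inner {ι : Type*} [DecidableEq ι] (B : Module.Basis ι ℝ V)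
    {ϖ : ι → V} (hϖ : ∀ i j, ⟪B i, ϖ j⟫ = if i = j then 1 else 0) (j : ι) (v : V) :
    B.repr v j = ⟪ϖ j, v⟫ := by
  have hcoord : B.coord j = innerₗ V (ϖ j) := B.ext fun i => by
    rw [Module.Basis.coord_apply, B.repr_self, innerₗ_apply_apply, real_inner_comm, hϖ,
      Finsupp.single_apply]
  exact LinearMap.congr_fun hcoord v

namespace GradedRootSystem

variable {Δ : Set V} {d : V → ℤ} {Pos : Set V} (h : GradedRootSystem Δ d Pos)
include h

theorem ne_zero_of_mem_pos {γ : V} (hγ : γ ∈ Pos) : γ ≠ 0 :=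
  h.nonzero γ (h.pos_subset hγ)

theorem neg_notMem_pos {γ : V} (hγ : γ ∈ Pos) : -γ ∉ Pos :=
  (h.pos_iff γ (h.pos_subset hγ)).1 hγ

theorem neg_mem_pos {γ : V} (hγ : γ ∈ Δ) (hγ' : γ ∉ Pos) : -γ ∈ Pos :=
  not_not.1 (mt (h.pos_iff γ hγ).2 hγ')

theorem add_ne_zero_of_mem_pos {x y : V} (hx : x ∈ Pos) (hy : y ∈ Pos) : x + y ≠ 0 :=
  fun hxy => h.neg_notMem_pos hx (by rwa [← eq_neg_of_add_eq_zero_right hxy])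

theorem grade_nonneg {γ : V} (hγ : γ ∈ Pos) : 0 ≤ d γ := by
  by_contra! hneg
  have hγΔ := h.pos_subset hγ
  exact h.neg_notMem_pos hγ (h.compatible _ (h.neg_mem γ hγΔ) (by rw [h.grade_neg γ hγΔ]; omega))

theorem grade_nonpos {γ : V} (hγ : γ ∈ Δ) (hγ' : γ ∉ Pos) : d γ ≤ 0 := by
  have := h.grade_nonneg (h.neg_mem_pos hγ hγ')
  rw [h.grade_neg γ hγ] at this
  omega

theorem sref_mem {α x : V} (hα : α ∈ Δ) (hx : x ∈ Δ) : sref α x ∈ Δ := by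
  rw [sref_apply]
  exact h.reflect_mem α hα x hx

theorem apply_mem_iff_of_mem_weyl {w : V ≃ₗ[ℝ] V} (hw : w ∈ weyl Δ) {x : V} :
    w x ∈ Δ ↔ x ∈ Δ := by
  induction hw using Subgroup.closure_induction generalizing x with
  | mem g hg =>
    obtain ⟨α, hα, rfl⟩ := hg
    exact ⟨fun hx => sref_sref α x ▸ h.sref_mem hα hx, h.sref_mem hα⟩
  | one => rfl
  | mul f g _ _ hf hg => exact hf.trans hg
  | inv f _ hf => exact hf.symm.trans (by rw [show f (f⁻¹ x) = x from f.apply_symm_apply x])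

theorem symm_apply_mem_of_mem_weyl {w : V ≃ₗ[ℝ] V} (hw : w ∈ weyl Δ) {x : V} (hx : x ∈ Δ) :
    w.symm x ∈ Δ :=
  (h.apply_mem_iff_of_mem_weyl hw).1 (by rwa [w.apply_symm_apply])

theorem add_mem_or_inner_le_neg {x y : V} (hx : x ∈ Δ) (hy : y ∈ Δ) (hxy : ⟪x, y⟫ < 0) :
    x + y ∈ Δ ∨ ⟪x, y⟫ ≤ -⟪y, y⟫ := by
  have hyy : 0 < ⟪y, y⟫ := real_inner_self_pos.2 (h.nonzero y hy)
  obtain ⟨n, hn⟩ := h.crystallographic y hy x hx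
  have hn0 : n < 0 := by exact_mod_cast hn ▸ div_neg_of_neg_of_pos (by linarith) hyy
  rcases (by omega : n = -1 ∨ n ≤ -2) with rfl | hn2
  · left
    have := h.reflect_mem y hy x hx
    rwa [← hn, Int.cast_neg, Int.cast_one, neg_one_smul, sub_neg_eq_add] at this
  · right
    have : 2 * ⟪x, y⟫ / ⟪y, y⟫ ≤ -2 := hn ▸ (by exact_mod_cast hn2)
    rw [div_le_iff₀ hyy] at this
    linarith

/-- If neither Cartan integer of `x` and `y` is `-1`, both are `≤ -2`, and then
`‖x + y‖² ≤ 0`. -/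
theorem add_mem_of_inner_neg {x y : V} (hx : x ∈ Δ) (hy : y ∈ Δ) (hxy : ⟪x, y⟫ < 0)
    (hne : x + y ≠ 0) : x + y ∈ Δ := by
  rcases h.add_mem_or_inner_le_neg hx hy hxy with hxy' | hy'
  · exact hxy'
  rcases h.add_mem_or_inner_le_neg hy hx (by rwa [real_inner_comm]) with hyx | hx'
  · rwa [add_comm]
  rw [real_inner_comm] at hx'
  have : ⟪x + y, x + y⟫ ≤ 0 := by
    simp only [inner_add_left, inner_add_right, real_inner_comm x y]
    linarith
  exact absurd (real_inner_self_nonpos.1 this) hne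

theorem add_mem_or_add_mem_of_add_add_mem {x p q : V} (hx : x ∈ Pos) (hp : p ∈ Pos)
    (hq : q ∈ Pos) (hxpq : x + (p + q) ∈ Δ) : x + p ∈ Δ ∨ x + q ∈ Δ := by
  have hxΔ := h.pos_subset hx
  by_cases hxp : ⟪x, p⟫ < 0
  · exact .inl (h.add_mem_of_inner_neg hxΔ (h.pos_subset hp) hxp (h.add_ne_zero_of_mem_pos hx hp))
  by_cases hxq : ⟪x, q⟫ < 0
  · exact .inr (h.add_mem_of_inner_neg hxΔ (h.pos_subset hq) hxq (h.add_ne_zero_of_mem_pos hx hq))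
  have hpq : 0 < ⟪p + q, p + q⟫ := real_inner_self_pos.2 (h.add_ne_zero_of_mem_pos hp hq)
  have key : 0 < ⟪x + (p + q), p⟫ ∨ 0 < ⟪x + (p + q), q⟫ := by
    by_contra! hle
    simp only [inner_add_left, inner_add_right] at hle hpq
    linarith [hle.1, hle.2]
  rcases key with hp' | hq'
  · have hsub : x + (p + q) + -p = x + q := by abel
    refine .inr (hsub ▸ h.add_mem_of_inner_neg hxpq (h.neg_mem p (h.pos_subset hp)) ?_ ?_)
    · rwa [inner_neg_right, neg_lt_zero]
    · rw [hsub]; exact h.add_ne_zero_of_mem_pos hx hq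
  · have hsub : x + (p + q) + -q = x + p := by abel
    refine .inl (hsub ▸ h.add_mem_of_inner_neg hxpq (h.neg_mem q (h.pos_subset hq)) ?_ ?_)
    · rwa [inner_neg_right, neg_lt_zero]
    · rw [hsub]; exact h.add_ne_zero_of_mem_pos hx hp

/-- If `a + b + ⋯ = 0`, then `⟪a, b⟫ < 0` for some summand `b`; replacing `a` and `b` by the
positive root `a + b` shortens the sum. -/
theorem multiset_sum_ne_zero (s : Multiset V) (hs : s ≠ 0) (hsPos : ∀ z ∈ s, z ∈ Pos) :
    s.sum ≠ 0 := by
  induction hn : Multiset.card s using Nat.strong_induction_on generalizing s with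
  | _ n ih =>
  obtain ⟨a, ha⟩ := Multiset.exists_mem_of_ne_zero hs
  obtain ⟨t, rfl⟩ := Multiset.exists_cons_of_mem ha
  have haPos := hsPos a (Multiset.mem_cons_self a t)
  have htPos : ∀ z ∈ t, z ∈ Pos := fun z hz => hsPos z (Multiset.mem_cons_of_mem hz)
  intro hsum
  rw [Multiset.sum_cons] at hsum
  obtain ⟨b, hbt, hab⟩ : ∃ b ∈ t, ⟪a, b⟫ < 0 := by
    by_contra! hnonneg
    have hsum_nonneg : 0 ≤ ⟪a, t.sum⟫ := by
      rw [← innerₗ_apply_apply, map_multiset_sum]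
      exact Multiset.sum_nonneg fun x hx => by
        obtain ⟨b, hb, rfl⟩ := Multiset.mem_map.1 hx
        exact hnonneg b hb
    rw [eq_neg_of_add_eq_zero_right hsum, inner_neg_right] at hsum_nonneg
    exact (real_inner_self_pos.2 (h.ne_zero_of_mem_pos haPos)).not_ge (by linarith)
  obtain ⟨t', rfl⟩ := Multiset.exists_cons_of_mem hbt
  have hbPos := htPos b (Multiset.mem_cons_self b t')
  have habPos : a + b ∈ Pos := h.pos_add a haPos b hbPos <|
    h.add_mem_of_inner_neg (h.pos_subset haPos) (h.pos_subset hbPos) hab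
      (h.add_ne_zero_of_mem_pos haPos hbPos)
  refine ih _ (by simp [← hn]) ((a + b) ::ₘ t') Multiset.cons_ne_zero (fun z hz => ?_) rfl ?_
  · rcases Multiset.mem_cons.1 hz with rfl | hz
    exacts [habPos, htPos z (Multiset.mem_cons_of_mem hz)]
  · rw [Multiset.sum_cons, ← hsum, Multiset.sum_cons, add_assoc]

theorem isStrictOrder_sub_mem_closure :
    IsStrictOrder V (fun a b => b - a ∈ AddSubsemigroup.closure Pos) where
  irrefl a ha := by
    obtain ⟨s, hs, hsPos, hsum⟩ := AddSubsemigroup.exists_multiset_of_mem_closure ha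
    exact h.multiset_sum_ne_zero s hs hsPos (by rw [hsum, sub_self])
  trans a b c hab hbc := by
    simpa using add_mem hbc hab

theorem pos_induction {P : V → Prop} (hP : ∀ γ ∈ Pos, (∀ μ ∈ Pos, γ - μ ∈ Pos → P μ) → P γ) :
    ∀ γ ∈ Pos, P γ := by
  have := h.isStrictOrder_sub_mem_closure
  intro γ hγ
  exact (h.finite.subset h.pos_subset).wellFoundedOn.induction hγ fun μ hμ ih =>
    hP μ hμ fun ν hν hμν => ih ν hν (AddSubsemigroup.subset_closure hμν)

theorem pos_subset_closure_simpleRoots : Pos ⊆ AddSubmonoid.closure (simpleRoots Pos) :=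
  h.pos_induction fun γ hγ ih => by
    by_cases hs : γ ∈ simpleRoots Pos
    · exact AddSubmonoid.subset_closure hs
    obtain ⟨a, ha, b, hb, rfl⟩ : ∃ a ∈ Pos, ∃ b ∈ Pos, γ = a + b := by
      by_contra hirr
      exact hs ⟨hγ, hirr⟩
    exact add_mem (ih a ha (by rwa [add_sub_cancel_left])) (ih b hb (by rwa [add_sub_cancel_right]))

theorem one_le_grade_of_mem_invSet {w : V ≃ₗ[ℝ] V} (hw : w ∈ W0 Δ d Pos) {γ : V}
    (hγ : γ ∈ invSet Pos w) : 1 ≤ d γ := by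
  rcases (h.grade_nonneg hγ.1).lt_or_eq with hpos | hzero
  · exact hpos
  · exact absurd hγ.2 (h.neg_notMem_pos (hw.2 γ ⟨hγ.1, hzero.symm⟩))

theorem two_le_grade_of_mem_invSet {w w' : V ≃ₗ[ℝ] V} (hw : w ∈ W0 Δ d Pos)
    (hsub : invSet Pos w ∩ level Δ d 1 ⊆ invSet Pos w') {γ : V} (hγ : γ ∈ invSet Pos w)
    (hγ' : γ ∉ invSet Pos w') : 2 ≤ d γ := by
  have := h.one_le_grade_of_mem_invSet hw hγ
  by_contra! hlt
  exact hγ' (hsub ⟨hγ, h.pos_subset hγ.1, by omega⟩)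

theorem notMem_invSet_iff {w : V ≃ₗ[ℝ] V} (hw : w ∈ weyl Δ) {γ : V} (hγ : γ ∈ Pos) :
    γ ∉ invSet Pos w ↔ w γ ∈ Pos := by
  have hwγ : w γ ∈ Δ := (h.apply_mem_iff_of_mem_weyl hw).2 (h.pos_subset hγ)
  exact ⟨fun hn => by_contra fun hc => hn ⟨hγ, h.neg_mem_pos hwγ hc⟩,
    fun hpos hinv => h.neg_notMem_pos hpos hinv.2⟩

theorem isBiConvex_invSet {w : V ≃ₗ[ℝ] V} (hw : w ∈ weyl Δ) :
    IsBiConvex Δ Pos (invSet Pos w) := by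
  have hwΔ : ∀ x, w x ∈ Δ ↔ x ∈ Δ := fun x => h.apply_mem_iff_of_mem_weyl hw
  constructor
  · rintro γ₁ ⟨hγ₁, hw₁⟩ γ₂ ⟨hγ₂, hw₂⟩ hsum
    refine ⟨h.pos_add _ hγ₁ _ hγ₂ hsum, ?_⟩
    rw [map_add, neg_add]
    refine h.pos_add _ hw₁ _ hw₂ ?_
    rw [← neg_add, ← map_add]
    exact h.neg_mem _ ((hwΔ _).2 hsum)
  · rintro γ₁ ⟨hγ₁, hn₁⟩ γ₂ ⟨hγ₂, hn₂⟩ hsum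
    have hsumPos := h.pos_add _ hγ₁ _ hγ₂ hsum
    refine ⟨hsumPos, (h.notMem_invSet_iff hw hsumPos).2 ?_⟩
    rw [map_add]
    refine h.pos_add _ ((h.notMem_invSet_iff hw hγ₁).1 hn₁) _
      ((h.notMem_invSet_iff hw hγ₂).1 hn₂) ?_
    rw [← map_add]
    exact (hwΔ _).2 hsum

theorem subset_of_forall_notMem_exists_add {S T : Set V} (hS : S ⊆ Pos)
    (hT : IsClosedSubset Δ T) (hsplit : ∀ γ ∈ S, γ ∉ T → ∃ μ ∈ S, ∃ ν ∈ S, γ = μ + ν) :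
    S ⊆ T := by
  intro γ hγ
  refine h.pos_induction (P := fun γ => γ ∈ S → γ ∈ T) (fun γ hγPos ih hγS => ?_) γ (hS hγ) hγ
  by_contra hγT
  obtain ⟨μ, hμ, ν, hν, rfl⟩ := hsplit γ hγS hγT
  have hμT := ih μ (hS hμ) (by rw [add_sub_cancel_left]; exact hS hν) hμ
  have hνT := ih ν (hS hν) (by rw [add_sub_cancel_right]; exact hS hμ) hν
  exact hγT (hT μ hμT ν hνT (h.pos_subset hγPos))

/-- Induction on `y`: split `y = p + q` using `hbelow`; one of `x + p`, `x + q` is a root, say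
`x + p`, and then `ξ = (x + p) + q` where either `f (x + p)` is positive or `x + p` is a new bad
summand with a smaller good partner `q`. -/
theorem mem_add_of_eq_add_of_notMem {f : V →ₗ[ℝ] V} (hf : ∀ x ∈ Δ, f x ∈ Δ) {ξ : V}
    (hξ : ξ ∈ Δ) (hfξ : 2 ≤ d (f ξ))
    (hbelow : ∀ y ∈ Pos, ξ - y ∈ Pos → f y ∈ Pos → 2 ≤ d (f y) →
      y ∈ (Pos ∩ f ⁻¹' Pos) + (Pos ∩ f ⁻¹' Pos)) :
    ∀ y ∈ Pos, f y ∈ Pos → ∀ x ∈ Pos, f x ∉ Pos → ξ = x + y →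
      ξ ∈ (Pos ∩ f ⁻¹' Pos) + (Pos ∩ f ⁻¹' Pos) := by
  refine h.pos_induction fun y hy ih hfy x hx hfx hξxy => ?_
  have hfxΔ := hf x (h.pos_subset hx)
  have hfyd : 2 ≤ d (f y) := by
    have hadd := h.grade_add _ hfxΔ _ (hf y (h.pos_subset hy))
      (by rw [← map_add, ← hξxy]; exact hf ξ hξ)
    rw [← map_add, ← hξxy] at hadd
    have := h.grade_nonpos hfxΔ hfx
    omega
  obtain ⟨p, ⟨hp, hfp⟩, q, ⟨hq, hfq⟩, hpq⟩ :=
    Set.mem_add.1 (hbelow y hy (by rwa [hξxy, add_sub_cancel_right]) hfy hfyd)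
  have key : ∀ p' ∈ Pos ∩ f ⁻¹' Pos, ∀ q' ∈ Pos ∩ f ⁻¹' Pos, p' + q' = y → x + p' ∈ Δ →
      ξ ∈ (Pos ∩ f ⁻¹' Pos) + (Pos ∩ f ⁻¹' Pos) := by
    rintro p' ⟨hp', -⟩ q' ⟨hq', hfq'⟩ hpq' hxp'
    have hxp'Pos := h.pos_add _ hx _ hp' hxp'
    have hξ' : ξ = (x + p') + q' := by rw [hξxy, ← hpq', add_assoc]
    by_cases hfxp' : f (x + p') ∈ Pos
    · exact hξ' ▸ Set.add_mem_add ⟨hxp'Pos, hfxp'⟩ ⟨hq', hfq'⟩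
    · exact ih q' hq' (by rwa [← hpq', add_sub_cancel_right]) hfq' _ hxp'Pos hfxp' hξ'
  rcases h.add_mem_or_add_mem_of_add_add_mem hx hp hq (by rw [hpq, ← hξxy]; exact hξ)
    with hxp | hxq
  · exact key p ⟨hp, hfp⟩ q ⟨hq, hfq⟩ hpq hxp
  · exact key q ⟨hq, hfq⟩ p ⟨hp, hfp⟩ (by rw [add_comm, hpq]) hxq

theorem mem_add_of_two_le_grade {f : V →ₗ[ℝ] V} (hf : ∀ x ∈ Δ, f x ∈ Δ)
    (hf1 : ∀ α ∈ simpleRoots Pos, d (f α) ≤ 1) :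
    ∀ ξ ∈ Pos, f ξ ∈ Pos → 2 ≤ d (f ξ) → ξ ∈ (Pos ∩ f ⁻¹' Pos) + (Pos ∩ f ⁻¹' Pos) := by
  refine h.pos_induction fun ξ hξ ih hfξ hd => ?_
  obtain ⟨a, ha, b, hb, rfl⟩ : ∃ a ∈ Pos, ∃ b ∈ Pos, ξ = a + b := by
    by_contra hirr
    have := hf1 ξ ⟨hξ, hirr⟩
    omega
  have hsplit := h.mem_add_of_eq_add_of_notMem hf (h.pos_subset hξ) hd ih
  by_cases hfb : f b ∈ Pos
  · by_cases hfa : f a ∈ Pos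
    · exact Set.add_mem_add ⟨ha, hfa⟩ ⟨hb, hfb⟩
    · exact hsplit b hb hfb a ha hfa rfl
  · have hfa_eq : f a = f (a + b) + -f b := by rw [map_add]; abel
    have hfa : f a ∈ Pos := hfa_eq ▸ h.pos_add _ hfξ _ (h.neg_mem_pos (hf b (h.pos_subset hb)) hfb)
      (hfa_eq ▸ hf a (h.pos_subset ha))
    exact hsplit a ha hfa b hb hfb (add_comm a b)

theorem invSet_subset_level_one (hlev : ∀ γ ∈ Δ, d γ ≤ 1) {w : V ≃ₗ[ℝ] V}
    (hw : w ∈ W0 Δ d Pos) : invSet Pos w ⊆ level Δ d 1 := fun γ hγ =>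
  ⟨h.pos_subset hγ.1, le_antisymm (hlev γ (h.pos_subset hγ.1)) (h.one_le_grade_of_mem_invSet hw hγ)⟩

theorem Wmin_eq_W0 (hlev : ∀ γ ∈ Δ, d γ ≤ 1) : Wmin Δ d Pos = W0 Δ d Pos := by
  refine Set.Subset.antisymm (fun w hw => hw.1) fun w hw => ⟨hw, fun w' _ heq => ?_⟩
  rw [← Set.inter_eq_left.2 (h.invSet_subset_level_one hlev hw), ← heq]
  exact Set.inter_subset_left

theorem Wmax_eq_W0 (hlev : ∀ γ ∈ Δ, d γ ≤ 1) : Wmax Δ d Pos = W0 Δ d Pos := by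
  refine Set.Subset.antisymm (fun w hw => hw.1) fun w hw => ⟨hw, fun w' hw' heq => ?_⟩
  rw [← Set.inter_eq_left.2 (h.invSet_subset_level_one hlev hw'), heq]
  exact Set.inter_subset_left

section Basis

variable {ι : Type*} {B : Module.Basis ι ℝ V} (hB' : simpleRoots Pos ⊆ Set.range B)
include hB'

theorem repr_nonneg {γ : V} (hγ : γ ∈ Pos) (j : ι) : 0 ≤ B.repr γ j := by
  suffices ∀ x ∈ AddSubmonoid.closure (simpleRoots Pos), 0 ≤ B.repr x j from
    this γ (h.pos_subset_closure_simpleRoots hγ)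
  intro x hx
  induction hx using AddSubmonoid.closure_induction with
  | mem x hx =>
    obtain ⟨i, rfl⟩ := hB' hx
    classical
    rw [B.repr_self, Finsupp.single_apply]
    split_ifs <;> norm_num
  | zero => simp
  | add x y _ _ hx hy => rw [map_add, Finsupp.add_apply]; exact add_nonneg hx hy

/-- A positive root other than `B i` has a positive coordinate off `i`, which the reflection
in `B i` does not change. -/
theorem sref_mem_pos {i : ι} (hi : B i ∈ Pos) {β : V} (hβ : β ∈ Pos) (hne : β ≠ B i) :
    sref (B i) β ∈ Pos := by
  have hβΔ := h.pos_subset hβ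
  obtain ⟨j, hji, hj⟩ : ∃ j, j ≠ i ∧ B.repr β j ≠ 0 := by
    by_contra! hcoord
    have hβ_eq : β = B.repr β i • B i := B.repr.injective <| by
      ext j
      by_cases hji : j = i
      · subst hji; simp
      · simp [hcoord j hji, Ne.symm hji]
    rcases h.reduced (B i) (h.pos_subset hi) _ (hβ_eq ▸ hβΔ) with hc | hc
    · exact hne (by rw [hβ_eq, hc, one_smul])
    · exact h.neg_notMem_pos hi (by rwa [hβ_eq, hc, neg_one_smul] at hβ)
  have hcoord : B.repr (sref (B i) β) j = B.repr β j := by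
    simp [sref_apply, Ne.symm hji]
  by_contra hnot
  have hneg := h.repr_nonneg hB' (h.neg_mem_pos (h.sref_mem (h.pos_subset hi) hβΔ) hnot) j
  rw [map_neg, Finsupp.neg_apply, hcoord] at hneg
  exact hj (le_antisymm (by linarith) (h.repr_nonneg hB' hβ j))

theorem sref_mem_pos_iff {i : ι} (hi : B i ∈ Pos) {β : V} (hne : β ≠ B i) (hne' : β ≠ -B i) :
    sref (B i) β ∈ Pos ↔ β ∈ Pos := by
  refine ⟨fun hsβ => ?_, fun hβ => h.sref_mem_pos hB' hi hβ hne⟩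
  rw [← sref_sref (B i) β]
  refine h.sref_mem_pos hB' hi hsβ fun heq => hne' ?_
  rw [← sref_sref (B i) β, heq, sref_self]

theorem mem_invSet_sref_mul_iff {i : ι} (hi : B i ∈ Pos) {w : V ≃ₗ[ℝ] V} {μ : V}
    (hne : w μ ≠ B i) (hne' : w μ ≠ -B i) :
    μ ∈ invSet Pos (sref (B i) * w) ↔ μ ∈ invSet Pos w := by
  have hneg : -w μ ≠ B i := fun he => hne' (by rw [← he, neg_neg])
  have hneg' : -w μ ≠ -B i := fun he => hne (neg_injective he)
  change μ ∈ Pos ∧ -sref (B i) (w μ) ∈ Pos ↔ μ ∈ Pos ∧ -w μ ∈ Pos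
  rw [← map_neg, h.sref_mem_pos_iff hB' hi hneg hneg']

theorem sref_mul_mem_W0 {i : ι} (hi : B i ∈ Pos) {w : V ≃ₗ[ℝ] V} (hw : w ∈ W0 Δ d Pos)
    (hk : d (w.symm (B i)) ≠ 0) : sref (B i) * w ∈ W0 Δ d Pos := by
  refine ⟨mul_mem (Subgroup.subset_closure ⟨B i, h.pos_subset hi, rfl⟩) hw.1, fun γ hγ => ?_⟩
  refine h.sref_mem_pos hB' hi (hw.2 γ hγ) fun he => hk ?_
  simpa [← he] using hγ.2

theorem invSet_sref_mul_inter_level_one {i : ι} (hi : B i ∈ Pos) {w : V ≃ₗ[ℝ] V}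
    (hk : d (w.symm (B i)) ≠ 1) (hk' : d (w.symm (B i)) ≠ -1) :
    invSet Pos (sref (B i) * w) ∩ level Δ d 1 = invSet Pos w ∩ level Δ d 1 := by
  ext μ
  refine and_congr_left fun hμ => h.mem_invSet_sref_mul_iff hB' hi ?_ ?_
  · intro he
    apply hk
    rw [← he, w.symm_apply_apply]
    exact hμ.2
  · intro he
    apply hk'
    rw [← neg_neg (B i), ← he, map_neg, w.symm_apply_apply, h.grade_neg μ hμ.1, hμ.2]

theorem neg_one_le_grade_of_mem_Wmin (hBPos : ∀ i, B i ∈ Pos) {w : V ≃ₗ[ℝ] V}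
    (hw : w ∈ Wmin Δ d Pos) (i : ι) : -1 ≤ d (w.symm (B i)) := by
  by_contra! hk
  have hwiΔ := h.symm_apply_mem_of_mem_weyl hw.1.1 (h.pos_subset (hBPos i))
  have hγ : -w.symm (B i) ∈ Pos :=
    h.compatible _ (h.neg_mem _ hwiΔ) (by rw [h.grade_neg _ hwiΔ]; omega)
  have hwγ : w (-w.symm (B i)) = -B i := by rw [map_neg, w.apply_symm_apply]
  have hsub := hw.2 _ (h.sref_mul_mem_W0 hB' (hBPos i) hw.1 (by omega))
    (h.invSet_sref_mul_inter_level_one hB' (hBPos i) (by omega) (by omega))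
  have hinv := (hsub ⟨hγ, by rw [hwγ, neg_neg]; exact hBPos i⟩).2
  rw [LinearEquiv.mul_apply, hwγ, map_neg, sref_self, neg_neg] at hinv
  exact h.neg_notMem_pos (hBPos i) hinv

theorem grade_le_one_of_mem_Wmax (hBPos : ∀ i, B i ∈ Pos) {w : V ≃ₗ[ℝ] V}
    (hw : w ∈ Wmax Δ d Pos) (i : ι) : d (w.symm (B i)) ≤ 1 := by
  by_contra! hk
  have hγ : w.symm (B i) ∈ Pos :=
    h.compatible _ (h.symm_apply_mem_of_mem_weyl hw.1.1 (h.pos_subset (hBPos i))) (by omega)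
  have hsub := hw.2 _ (h.sref_mul_mem_W0 hB' (hBPos i) hw.1 (by omega))
    (h.invSet_sref_mul_inter_level_one hB' (hBPos i) (by omega) (by omega))
  have hγ' : w.symm (B i) ∈ invSet Pos (sref (B i) * w) := by
    refine ⟨hγ, ?_⟩
    rw [LinearEquiv.mul_apply, w.apply_symm_apply, sref_self, neg_neg]
    exact hBPos i
  have hinv := (hsub hγ').2
  rw [w.apply_symm_apply] at hinv
  exact h.neg_notMem_pos (hBPos i) hinv

theorem mem_Wmin_of_forall_neg_one_le {w : V ≃ₗ[ℝ] V} (hw : w ∈ W0 Δ d Pos)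
    (hk : ∀ i, -1 ≤ d (w.symm (B i))) : w ∈ Wmin Δ d Pos := by
  refine ⟨hw, fun w' hw' heq => ?_⟩
  refine h.subset_of_forall_notMem_exists_add (fun γ hγ => hγ.1) (h.isBiConvex_invSet hw'.1).1
    fun γ hγ hγ' => ?_
  let f : V →ₗ[ℝ] V := -(w.symm : V →ₗ[ℝ] V)
  have hf : ∀ x ∈ Δ, f x ∈ Δ := fun x hx => h.neg_mem _ (h.symm_apply_mem_of_mem_weyl hw.1 hx)
  have hf1 : ∀ α ∈ simpleRoots Pos, d (f α) ≤ 1 := by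
    rintro α hα
    obtain ⟨i, rfl⟩ := hB' hα
    have := hk i
    change d (-w.symm (B i)) ≤ 1
    rw [h.grade_neg _ (h.symm_apply_mem_of_mem_weyl hw.1 (h.pos_subset hα.1))]
    omega
  have hfγ : f (-w γ) = γ := by simp [f]
  obtain ⟨x, ⟨hx, hfx⟩, y, ⟨hy, hfy⟩, hxy⟩ := Set.mem_add.1 <|
    h.mem_add_of_two_le_grade hf hf1 _ hγ.2 (by rw [hfγ]; exact hγ.1)
      (by rw [hfγ]; exact h.two_le_grade_of_mem_invSet hw (fun μ hμ => (heq.ge hμ).1) hγ hγ')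
  have hinv : ∀ z ∈ Pos, f z ∈ Pos → f z ∈ invSet Pos w := fun z hz hfz => ⟨hfz, by simpa [f]⟩
  exact ⟨f x, hinv x hx hfx, f y, hinv y hy hfy, by rw [← map_add, hxy, hfγ]⟩

theorem mem_Wmax_of_forall_le_one {w : V ≃ₗ[ℝ] V} (hw : w ∈ W0 Δ d Pos)
    (hk : ∀ i, d (w.symm (B i)) ≤ 1) : w ∈ Wmax Δ d Pos := by
  refine ⟨hw, fun w' hw' heq γ hγ' => by_contra fun hγ => ?_⟩
  suffices Pos \ invSet Pos w ⊆ Pos \ invSet Pos w' from (this ⟨hγ'.1, hγ⟩).2 hγ'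
  refine h.subset_of_forall_notMem_exists_add Set.sdiff_subset (h.isBiConvex_invSet hw'.1).2
    fun γ hγ hγ' => ?_
  have hγ' : γ ∈ invSet Pos w' := by_contra fun hn => hγ' ⟨hγ.1, hn⟩
  let f : V →ₗ[ℝ] V := w.symm
  have hf : ∀ x ∈ Δ, f x ∈ Δ := fun x hx => h.symm_apply_mem_of_mem_weyl hw.1 hx
  have hf1 : ∀ α ∈ simpleRoots Pos, d (f α) ≤ 1 := by
    rintro α hα
    obtain ⟨i, rfl⟩ := hB' hα
    exact hk i
  have hfγ : f (w γ) = γ := w.symm_apply_apply γ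
  obtain ⟨x, ⟨hx, hfx⟩, y, ⟨hy, hfy⟩, hxy⟩ := Set.mem_add.1 <|
    h.mem_add_of_two_le_grade hf hf1 _ ((h.notMem_invSet_iff hw.1 hγ.1).1 hγ.2)
      (by rw [hfγ]; exact hγ.1)
      (by rw [hfγ]; exact h.two_le_grade_of_mem_invSet hw' (fun μ hμ => (heq.le hμ).1) hγ' hγ.2)
  have hout : ∀ z ∈ Pos, f z ∈ Pos → f z ∈ Pos \ invSet Pos w := fun z hz hfz =>
    ⟨hfz, (h.notMem_invSet_iff hw.1 hfz).2 (by simpa [f] using hz)⟩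
  exact ⟨f x, hout x hx hfx, f y, hout y hy hfy, by rw [← map_add, hxy, hfγ]⟩

theorem Wmin_eq (hBPos : ∀ i, B i ∈ Pos) :
    Wmin Δ d Pos = {w ∈ W0 Δ d Pos | ∀ i, -1 ≤ d (w.symm (B i))} :=
  Set.ext fun _ => ⟨fun hw => ⟨hw.1, h.neg_one_le_grade_of_mem_Wmin hB' hBPos hw⟩,
    fun hw => h.mem_Wmin_of_forall_neg_one_le hB' hw.1 hw.2⟩

theorem Wmax_eq (hBPos : ∀ i, B i ∈ Pos) :
    Wmax Δ d Pos = {w ∈ W0 Δ d Pos | ∀ i, d (w.symm (B i)) ≤ 1} :=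
  Set.ext fun _ => ⟨fun hw => ⟨hw.1, h.grade_le_one_of_mem_Wmax hB' hBPos hw⟩,
    fun hw => h.mem_Wmax_of_forall_le_one hB' hw.1 hw.2⟩

end Basis

end GradedRootSystem

end

theorem stmt15_general (Δ : Set V) (d : V → ℤ) (Pos : Set V)
    (h : GradedRootSystem Δ d Pos)
    {ι : Type*} [DecidableEq ι] (B : Module.Basis ι ℝ V)
    (hB : ∀ i, B i ∈ simpleRoots Pos) (hB' : simpleRoots Pos ⊆ Set.range B)
    (ϖ : ι → V) (hϖ : ∀ i j, ⟪B i, ϖ j⟫ = if i = j then 1 else 0)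
    (i₀ : ι) (hstd : ∀ γ ∈ Δ, (d γ : ℝ) = B.repr γ i₀) :
    ((fun w : V ≃ₗ[ℝ] V => fun i => d (w.symm (B i))) '' Wmin Δ d Pos =
      (fun w : V ≃ₗ[ℝ] V => fun i => d (w.symm (B i))) ''
        {w ∈ W0 Δ d Pos | ∀ i, -1 ≤ d (w.symm (B i))}) ∧
    ((fun w : V ≃ₗ[ℝ] V => fun i => d (w.symm (B i))) '' Wmax Δ d Pos =
      (fun w : V ≃ₗ[ℝ] V => fun i => d (w.symm (B i))) ''
        {w ∈ W0 Δ d Pos | ∀ i, d (w.symm (B i)) ≤ 1}) ∧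
    ((∀ γ ∈ Δ, ⟪ϖ i₀, γ⟫ = -1 ∨ ⟪ϖ i₀, γ⟫ = 0 ∨ ⟪ϖ i₀, γ⟫ = 1) →
      Wmin Δ d Pos = W0 Δ d Pos ∧ Wmax Δ d Pos = W0 Δ d Pos) := by
  have hBPos : ∀ i, B i ∈ Pos := fun i => (hB i).1
  refine ⟨by rw [h.Wmin_eq hB' hBPos], by rw [h.Wmax_eq hB' hBPos], fun hminuscule => ?_⟩
  have hlev : ∀ γ ∈ Δ, d γ ≤ 1 := fun γ hγ => by
    have : (d γ : ℝ) ≤ 1 := by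
      rw [hstd γ hγ, B.repr_apply_eq_inner hϖ]
      rcases hminuscule γ hγ with hk | hk | hk <;> rw [hk] <;> norm_num
    exact_mod_cast this
  exact ⟨h.Wmin_eq_W0 hlev, h.Wmax_eq_W0 hlev⟩

/-- In the 1-standard case: `η(W⁰_min) = {η(w) : k_α(w) ≥ -1 ∀α}` and
`η(W⁰_max) = {η(w) : k_α(w) ≤ 1 ∀α}`; in the minuscule (abelian) case
`W⁰_min = W⁰_max = W⁰`. -/
theorem stmt15 (Δ : Set V) (d : V → ℤ) (Pos : Set V)
    (h : GradedRootSystem Δ d Pos)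
    {ι : Type*} [Fintype ι] [DecidableEq ι] (B : Module.Basis ι ℝ V)
    (hB : ∀ i, B i ∈ simpleRoots Pos) (hB' : simpleRoots Pos ⊆ Set.range B)
    (ϖ : ι → V) (hϖ : ∀ i j, ⟪B i, ϖ j⟫ = if i = j then 1 else 0)
    (i₀ : ι) (hstd : ∀ γ ∈ Δ, (d γ : ℝ) = B.repr γ i₀) :
    ((fun w : V ≃ₗ[ℝ] V => fun i => d (w.symm (B i))) '' Wmin Δ d Pos =
      (fun w : V ≃ₗ[ℝ] V => fun i => d (w.symm (B i))) ''
        {w ∈ W0 Δ d Pos | ∀ i, -1 ≤ d (w.symm (B i))}) ∧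
    ((fun w : V ≃ₗ[ℝ] V => fun i => d (w.symm (B i))) '' Wmax Δ d Pos =
      (fun w : V ≃ₗ[ℝ] V => fun i => d (w.symm (B i))) ''
        {w ∈ W0 Δ d Pos | ∀ i, d (w.symm (B i)) ≤ 1}) ∧
    ((∀ γ ∈ Δ, ⟪ϖ i₀, γ⟫ = -1 ∨ ⟪ϖ i₀, γ⟫ = 0 ∨ ⟪ϖ i₀, γ⟫ = 1) →
      Wmin Δ d Pos = W0 Δ d Pos ∧ Wmax Δ d Pos = W0 Δ d Pos) :=
  stmt15_general Δ d Pos h B hB hB' ϖ hϖ i₀ hstd
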